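/- Let X be a vector space and let A₁, A₂, C ∈ End(X)⟦z⟧ be formal power series of operators with zero constant term such that [ad_C^ℓ(A_i), ad_C^m(A_j)] = 0 for all i, j ∈ {1,2} and all ℓ, m ≥ 0. Then e^{A₁+C} · e^{−C} · e^{A₂+C} = e^{A₁+A₂+C}. -/

import Mathlib

/-!
Introduce an auxiliary parameter `t` and put `u(t) = ∫₀ᵗ e^{s ad_c}(a) ds
= ∑ t^{m+1} ad_cᵐ(a)/(m+1)!`. If the `ad_cᵐ(a)` commute pairwise, then `u` commutes with
`t u'` and with `[u, tc] = t a - t u'`, so `e^u (tc) = (tc + [u, tc]) e^u`; hence `e^{t(a+c)}` and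
`e^u e^{tc}` both solve `t F' = t (a + c) F` with `F(0) = 1`, and they coincide. As `u` is
additive in `a` and `u(a₁)`, `u(a₂)` commute, `e^{t(a₁+c)} e^{-tc} e^{t(a₂+c)}
= e^{u(a₁)} e^{u(a₂)} e^{tc} = e^{u(a₁+a₂)} e^{tc} = e^{t(a₁+a₂+c)}`.
Finally, for arguments without constant term in `z`, the `t^k` coefficient of `e^{tx}` has
`z`-order at least `k`; on such series setting `t = 1` is multiplicative and turns `e^{tx}`
into `e^x`.
-/

open PowerSeries

noncomputable def adPow {R : Type*} [Ring R] (C : PowerSeries R) (m : ℕ)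
    (A : PowerSeries R) : PowerSeries R :=
  (fun X => C * X - X * C)^[m] A

noncomputable def expPS {R : Type*} [Ring R] [Algebra ℚ R] (A : PowerSeries R) :
    PowerSeries R :=
  PowerSeries.mk fun n =>
    ∑ k ∈ Finset.range (n + 1), (k.factorial : ℚ)⁻¹ • PowerSeries.coeff n (A ^ k)

open Finset LieAlgebra

open scoped Nat

theorem Finset.sum_range_sum_antidiagonal_eq_sum_range_sum_range {M : Type*} [AddCommMonoid M]
    (N : ℕ) (f : ℕ → ℕ → M) (hf : ∀ i j, N ≤ i + j → f i j = 0) :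
    ∑ k ∈ range N, ∑ p ∈ antidiagonal k, f p.1 p.2 = ∑ i ∈ range N, ∑ j ∈ range N, f i j := by
  simp only [Nat.sum_antidiagonal_eq_sum_range_succ f, sum_range_diag_flip]
  refine sum_congr rfl fun i hi => sum_subset (fun j hj => ?_) fun j _ hj => hf i j ?_
  · simp only [mem_range] at hi hj ⊢; omega
  · simp only [mem_range] at hi hj; omega

theorem inv_factorial_add_mul_choose (i j : ℕ) :
    ((i + j)! : ℚ)⁻¹ * (i + j).choose i = (i ! : ℚ)⁻¹ * (j ! : ℚ)⁻¹ := by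
  rw [Nat.cast_choose ℚ (Nat.le_add_right i j), Nat.add_sub_cancel_left]
  field_simp

theorem inv_factorial_succ_smul_succ_nsmul {M : Type*} [AddCommGroup M] [Module ℚ M] (n : ℕ)
    (x : M) : ((n + 1)! : ℚ)⁻¹ • ((n + 1) • x) = (n ! : ℚ)⁻¹ • x := by
  rw [← Nat.cast_smul_eq_nsmul ℚ, smul_smul, Nat.factorial_succ]
  congr 1
  push_cast
  field_simp

theorem pow_succ_mul_eq_mul_pow_succ_add {R : Type*} [Ring R] {f g w : R}
    (hw : f * g - g * f = w) (hfw : Commute f w) (k : ℕ) :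
    f ^ (k + 1) * g = g * f ^ (k + 1) + (k + 1) • (w * f ^ k) := by
  have hfg : f * g = g * f + w := by rw [← hw]; abel
  induction k with
  | zero => simp [hfg]
  | succ k ih =>
    rw [pow_succ', mul_assoc, ih, mul_add, ← mul_assoc, hfg, mul_smul_comm, ← mul_assoc f w,
      hfw.eq, add_mul, mul_assoc, mul_assoc w, ← pow_succ', ← pow_succ',
      succ_nsmul _ (k + 1)]
    abel

section ExpPartialSum

variable {R : Type*} [Ring R] [Algebra ℚ R]

noncomputable def expPartialSum (N : ℕ) (x : R) : R :=
  ∑ k ∈ range N, (k ! : ℚ)⁻¹ • x ^ k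

theorem expPartialSum_succ_mul {f g w : R} (hw : f * g - g * f = w) (hfw : Commute f w)
    (N : ℕ) :
    expPartialSum (N + 1) f * g = g * expPartialSum (N + 1) f + w * expPartialSum N f := by
  simp only [expPartialSum, sum_mul, mul_sum, smul_mul_assoc, mul_smul_comm]
  rw [sum_range_succ', sum_range_succ' (fun k => (k ! : ℚ)⁻¹ • (g * f ^ k))]
  simp only [pow_succ_mul_eq_mul_pow_succ_add hw hfw, smul_add, sum_add_distrib,
    inv_factorial_succ_smul_succ_nsmul, pow_zero, one_mul, mul_one]
  abel

end ExpPartialSum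

namespace PowerSeries

section Coeff

variable {R : Type*} [Ring R]

theorem coeff_eq_of_lt_order_sub {a a' : R⟦X⟧} {n : ℕ} (h : (n : ℕ∞) < (a - a').order) :
    coeff n a = coeff n a' := by
  rw [← sub_eq_zero, ← map_sub]
  exact coeff_of_lt_order n h

theorem coeff_mul_eq_of_lt_order_sub_right {a b b' : R⟦X⟧} {n : ℕ}
    (h : (n : ℕ∞) < a.order + (b - b').order) : coeff n (a * b) = coeff n (a * b') :=
  coeff_eq_of_lt_order_sub (by rw [← mul_sub]; exact h.trans_le (le_order_mul _ _))

theorem coeff_mul_eq_of_lt_order_sub_left {a a' b : R⟦X⟧} {n : ℕ}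
    (h : (n : ℕ∞) < (a - a').order + b.order) : coeff n (a * b) = coeff n (a' * b) :=
  coeff_eq_of_lt_order_sub (by rw [← sub_mul]; exact h.trans_le (le_order_mul _ _))

theorem commute_of_forall_coeff {f g : R⟦X⟧} (h : ∀ i j, Commute (coeff i f) (coeff j g)) :
    Commute f g := by
  ext n
  rw [coeff_mul, coeff_mul, ← Nat.sum_antidiagonal_swap]
  exact sum_congr rfl fun p _ => (h p.2 p.1).eq

end Coeff

section ExpT

variable {R : Type*} [Ring R] [Algebra ℚ R]

/-- `e^{tx}`, the variable of the power series ring playing the role of an auxiliary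
parameter `t`. -/
noncomputable def expt (x : R) : R⟦X⟧ :=
  mk fun n => (n ! : ℚ)⁻¹ • x ^ n

@[simp]
theorem coeff_expt (x : R) (n : ℕ) : coeff n (expt x) = (n ! : ℚ)⁻¹ • x ^ n :=
  coeff_mk _ _

@[simp]
theorem constantCoeff_expt (x : R) : constantCoeff (expt x) = 1 := by
  rw [← coeff_zero_eq_constantCoeff_apply, coeff_expt]
  simp

theorem expt_add {x y : R} (h : Commute x y) : expt (x + y) = expt x * expt y := by
  ext n
  rw [coeff_mul, coeff_expt, h.add_pow', smul_sum]
  refine sum_congr rfl fun p hp => ?_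
  obtain rfl := mem_antidiagonal.mp hp
  rw [coeff_expt, coeff_expt, smul_mul_smul_comm, ← Nat.cast_smul_eq_nsmul ℚ, smul_smul,
    inv_factorial_add_mul_choose]

theorem expt_zero : expt (0 : R) = 1 := by
  ext n
  rcases n with _ | n <;> simp

theorem expt_mul_expt_neg (x : R) : expt x * expt (-x) = 1 := by
  rw [← expt_add (Commute.neg_right (Commute.refl x)), add_neg_cancel, expt_zero]

end ExpT

section EvalOne

variable {S : Type*} [Ring S]

/-- Evaluation at `t = 1` of a series in `t` with coefficients in `S⟦z⟧`. Only the `t^k` with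
`k ≤ n` contribute to the coefficient of `zⁿ`: this is the true value on `Admissible` series,
a junk value elsewhere. -/
noncomputable def evalOne (F : S⟦X⟧⟦X⟧) : S⟦X⟧ :=
  mk fun n => ∑ k ∈ range (n + 1), coeff n (coeff k F)

def Admissible (F : S⟦X⟧⟦X⟧) : Prop :=
  ∀ k : ℕ, (k : ℕ∞) ≤ (coeff k F).order

theorem coeff_coeff_mul_coeff_eq_zero {F G : S⟦X⟧⟦X⟧} (hF : Admissible F) (hG : Admissible G)
    {i j n : ℕ} (h : n < i + j) : coeff n (coeff i F * coeff j G) = 0 :=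
  coeff_of_lt_order n <| (by exact_mod_cast h : (n : ℕ∞) < i + j).trans_le <|
    (add_le_add (hF i) (hG j)).trans (le_order_mul _ _)

theorem Admissible.mul {F G : S⟦X⟧⟦X⟧} (hF : Admissible F) (hG : Admissible G) :
    Admissible (F * G) := fun k =>
  nat_le_order _ _ fun n hn => by
    rw [coeff_mul, map_sum]
    refine sum_eq_zero fun p hp => coeff_coeff_mul_coeff_eq_zero hF hG ?_
    rwa [mem_antidiagonal.mp hp]

theorem le_order_evalOne_sub_sum {F : S⟦X⟧⟦X⟧} (hF : Admissible F) (N : ℕ) :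
    (N : ℕ∞) ≤ (evalOne F - ∑ k ∈ range N, coeff k F).order := by
  refine nat_le_order _ _ fun n hn => ?_
  rw [map_sub, map_sum, evalOne, coeff_mk, sub_eq_zero]
  refine sum_subset (range_subset_range.mpr hn) fun k _ hk => coeff_of_lt_order n ?_
  simp only [mem_range, not_lt] at hk
  exact (by exact_mod_cast hk : (n : ℕ∞) < k).trans_le (hF k)

theorem evalOne_mul {F G : S⟦X⟧⟦X⟧} (hF : Admissible F) (hG : Admissible G) :
    evalOne (F * G) = evalOne F * evalOne G := by
  ext n
  have hn : (n : ℕ∞) < (n + 1 : ℕ) := by exact_mod_cast n.lt_succ_self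
  calc coeff n (evalOne (F * G))
      = ∑ k ∈ range (n + 1), ∑ p ∈ antidiagonal k, coeff n (coeff p.1 F * coeff p.2 G) := by
        simp only [evalOne, coeff_mk, coeff_mul, map_sum]
    _ = ∑ i ∈ range (n + 1), ∑ j ∈ range (n + 1), coeff n (coeff i F * coeff j G) :=
        sum_range_sum_antidiagonal_eq_sum_range_sum_range _ _ fun i j h =>
          coeff_coeff_mul_coeff_eq_zero hF hG h
    _ = coeff n ((∑ i ∈ range (n + 1), coeff i F) * ∑ j ∈ range (n + 1), coeff j G) := by
        simp only [sum_mul_sum, map_sum]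
    _ = coeff n (evalOne F * evalOne G) := by
        rw [coeff_mul_eq_of_lt_order_sub_left (a := evalOne F)
          (hn.trans_le ((le_order_evalOne_sub_sum hF _).trans le_self_add)),
          coeff_mul_eq_of_lt_order_sub_right
            (hn.trans_le ((le_order_evalOne_sub_sum hG _).trans le_add_self))]

variable [Algebra ℚ S]

theorem admissible_expt {f : S⟦X⟧} (hf : constantCoeff f = 0) : Admissible (expt f) := fun k => by
  rw [coeff_expt, Algebra.smul_def]
  exact (le_order_pow_of_constantCoeff_eq_zero k hf).trans (le_add_self.trans (le_order_mul _ _))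

theorem expPS_eq_evalOne_expt (f : S⟦X⟧) : expPS f = evalOne (expt f) := by
  ext n
  simp only [expPS, evalOne, coeff_mk, coeff_expt, coeff_smul]

end EvalOne

section ExpPS

variable {R : Type*} [Ring R] [Algebra ℚ R] {f : R⟦X⟧}

theorem expPS_add {g : R⟦X⟧} (hf : constantCoeff f = 0) (hg : constantCoeff g = 0)
    (h : Commute f g) : expPS (f + g) = expPS f * expPS g := by
  rw [expPS_eq_evalOne_expt, expt_add h, evalOne_mul (admissible_expt hf) (admissible_expt hg),
    ← expPS_eq_evalOne_expt, ← expPS_eq_evalOne_expt]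

theorem coeff_expPS (f : R⟦X⟧) (n : ℕ) : coeff n (expPS f) = coeff n (expPartialSum (n + 1) f) := by
  simp only [expPS, expPartialSum, coeff_mk, map_sum, coeff_smul]

@[simp]
theorem constantCoeff_expPS (f : R⟦X⟧) : constantCoeff (expPS f) = 1 := by
  simp [← coeff_zero_eq_constantCoeff_apply, coeff_expPS, expPartialSum]

theorem le_order_expPS_sub_expPartialSum (hf : constantCoeff f = 0) (N : ℕ) :
    (N : ℕ∞) ≤ (expPS f - expPartialSum N f).order := by
  simpa only [expPS_eq_evalOne_expt, coeff_expt, expPartialSum] using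
    le_order_evalOne_sub_sum (admissible_expt hf) N

theorem coeff_expPS_mul (hf : constantCoeff f = 0) (b : R⟦X⟧) (n : ℕ) :
    coeff n (expPS f * b) = coeff n (expPartialSum (n + 1) f * b) :=
  coeff_mul_eq_of_lt_order_sub_left <| (ENat.natCast_lt_natCast.mpr n.lt_succ_self).trans_le <|
    (le_order_expPS_sub_expPartialSum hf _).trans le_self_add

theorem coeff_mul_expPS (hf : constantCoeff f = 0) (b : R⟦X⟧) (n : ℕ) :
    coeff n (b * expPS f) = coeff n (b * expPartialSum (n + 1) f) :=
  coeff_mul_eq_of_lt_order_sub_right <| (ENat.natCast_lt_natCast.mpr n.lt_succ_self).trans_le <|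
    (le_order_expPS_sub_expPartialSum hf _).trans le_add_self

theorem coeff_mul_expPS_of_constantCoeff_eq_zero (hf : constantCoeff f = 0) {b : R⟦X⟧}
    (hb : constantCoeff b = 0) (n : ℕ) :
    coeff n (b * expPS f) = coeff n (b * expPartialSum n f) :=
  coeff_mul_eq_of_lt_order_sub_right <| (by norm_cast; omega : (n : ℕ∞) < 1 + n).trans_le <|
    add_le_add (one_le_order_iff_constCoeff_eq_zero.mpr hb) (le_order_expPS_sub_expPartialSum hf n)

theorem expPS_mul_eq_add_mul {g w : R⟦X⟧} (hf : constantCoeff f = 0) (hw : f * g - g * f = w)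
    (hfw : Commute f w) : expPS f * g = (g + w) * expPS f := by
  have hw₀ : constantCoeff w = 0 := by
    rw [← hw]
    simp [hf]
  ext n
  rw [add_mul, map_add, coeff_expPS_mul hf, coeff_mul_expPS hf,
    coeff_mul_expPS_of_constantCoeff_eq_zero hf hw₀, expPartialSum_succ_mul hw hfw, map_add]

end ExpPS

section EulerDeriv

variable {R : Type*} [Ring R]

noncomputable def eulerDeriv : R⟦X⟧ →+ R⟦X⟧ where
  toFun f := mk fun n => n • coeff n f
  map_zero' := by ext; simp
  map_add' f g := by ext; simp [smul_add]

@[simp]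
theorem coeff_eulerDeriv (f : R⟦X⟧) (n : ℕ) : coeff n (eulerDeriv f) = n • coeff n f := by
  simp [eulerDeriv]

@[simp]
theorem eulerDeriv_one : eulerDeriv (1 : R⟦X⟧) = 0 := by
  ext n
  rcases n with _ | n <;> simp [coeff_one]

@[simp]
theorem constantCoeff_eulerDeriv (f : R⟦X⟧) : constantCoeff (eulerDeriv f) = 0 := by
  rw [← coeff_zero_eq_constantCoeff_apply, coeff_eulerDeriv, zero_smul]

theorem eulerDeriv_mul (f g : R⟦X⟧) :
    eulerDeriv (f * g) = eulerDeriv f * g + f * eulerDeriv g := by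
  ext n
  simp only [coeff_eulerDeriv, map_add, coeff_mul, smul_sum, ← sum_add_distrib]
  refine sum_congr rfl fun p hp => ?_
  rw [← mem_antidiagonal.mp hp, add_smul, smul_mul_assoc, mul_smul_comm]

theorem eulerDeriv_pow_succ {f : R⟦X⟧} (h : Commute f (eulerDeriv f)) (k : ℕ) :
    eulerDeriv (f ^ (k + 1)) = (k + 1) • (eulerDeriv f * f ^ k) := by
  induction k with
  | zero => simp
  | succ k ih =>
    rw [pow_succ, eulerDeriv_mul, ih, smul_mul_assoc, mul_assoc, ← pow_succ,
      (h.pow_left (k + 1)).eq, succ_nsmul _ (k + 1)]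

variable [Algebra ℚ R]

theorem eq_of_eulerDeriv_eq_mul {Q F G : R⟦X⟧} (hQ : constantCoeff Q = 0)
    (hF : eulerDeriv F = Q * F) (hG : eulerDeriv G = Q * G)
    (h₀ : constantCoeff F = constantCoeff G) : F = G := by
  ext n
  induction n using Nat.strong_induction_on with
  | _ n ih =>
    rcases n with _ | n
    · simpa using h₀
    have h : (n + 1) • coeff (n + 1) F = (n + 1) • coeff (n + 1) G := by
      rw [← coeff_eulerDeriv, ← coeff_eulerDeriv, hF, hG, coeff_mul, coeff_mul]
      refine sum_congr rfl fun p hp => ?_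
      rcases p with ⟨_ | i, j⟩
      · simp [hQ]
      · rw [ih j (by have := mem_antidiagonal.mp hp; simp only at this; omega)]
    rw [← Nat.cast_smul_eq_nsmul ℚ, ← Nat.cast_smul_eq_nsmul ℚ] at h
    exact smul_right_injective R (Nat.cast_ne_zero.mpr n.succ_ne_zero) h

theorem eulerDeriv_expt (x : R) : eulerDeriv (expt x) = C x * X * expt x := by
  ext n
  rcases n with _ | n
  · simp
  · rw [coeff_eulerDeriv, coeff_expt, mul_assoc, coeff_C_mul, coeff_succ_X_mul, coeff_expt,
      smul_comm, inv_factorial_succ_smul_succ_nsmul, mul_smul_comm, pow_succ']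

theorem eulerDeriv_expPartialSum_succ {f : R⟦X⟧} (h : Commute f (eulerDeriv f)) (N : ℕ) :
    eulerDeriv (expPartialSum (N + 1) f) = eulerDeriv f * expPartialSum N f := by
  rw [expPartialSum, sum_range_succ', map_add, map_sum, expPartialSum, mul_sum]
  simp only [map_rat_smul, eulerDeriv_pow_succ h, inv_factorial_succ_smul_succ_nsmul,
    mul_smul_comm]
  simp

theorem eulerDeriv_expPS {f : R⟦X⟧} (hf : constantCoeff f = 0) (h : Commute f (eulerDeriv f)) :
    eulerDeriv (expPS f) = eulerDeriv f * expPS f := by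
  ext n
  rw [coeff_eulerDeriv, coeff_expPS, ← coeff_eulerDeriv, eulerDeriv_expPartialSum_succ h,
    coeff_mul_expPS_of_constantCoeff_eq_zero hf (constantCoeff_eulerDeriv f)]

end EulerDeriv

section AdExpIntegral

attribute [local instance] LieRing.ofAssociativeRing

variable {R : Type*} [Ring R] [Algebra ℚ R]

theorem ad_pow_succ_apply (c a : R) (m : ℕ) :
    (ad ℚ R c ^ (m + 1)) a = c * (ad ℚ R c ^ m) a - (ad ℚ R c ^ m) a * c := by
  rw [pow_succ', Module.End.mul_apply, ad_apply, Ring.lie_def]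

theorem adPow_eq_ad_pow_apply (c a : R⟦X⟧) (m : ℕ) : adPow c m a = (ad ℚ R⟦X⟧ c ^ m) a := by
  rw [adPow, Module.End.pow_apply]
  rfl

def AdPowCommute (c a b : R) : Prop :=
  ∀ l m : ℕ, Commute ((ad ℚ R c ^ l) a) ((ad ℚ R c ^ m) b)

/-- `u(t) = ∫₀ᵗ e^{s ad_c}(a) ds`. -/
noncomputable def adExpIntegral (c a : R) : R⟦X⟧ :=
  X * mk fun m => ((m + 1)! : ℚ)⁻¹ • (ad ℚ R c ^ m) a

@[simp]
theorem coeff_zero_adExpIntegral (c a : R) : coeff 0 (adExpIntegral c a) = 0 := by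
  simp [adExpIntegral]

@[simp]
theorem coeff_succ_adExpIntegral (c a : R) (m : ℕ) :
    coeff (m + 1) (adExpIntegral c a) = ((m + 1)! : ℚ)⁻¹ • (ad ℚ R c ^ m) a := by
  rw [adExpIntegral, coeff_succ_X_mul, coeff_mk]

@[simp]
theorem constantCoeff_adExpIntegral (c a : R) : constantCoeff (adExpIntegral c a) = 0 := by
  rw [← coeff_zero_eq_constantCoeff_apply, coeff_zero_adExpIntegral]

theorem adExpIntegral_add (c a b : R) :
    adExpIntegral c (a + b) = adExpIntegral c a + adExpIntegral c b := by
  ext (_ | m) <;> simp [smul_add]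

theorem commute_adExpIntegral {c a b : R} (h : AdPowCommute c a b) :
    Commute (adExpIntegral c a) (adExpIntegral c b) :=
  commute_of_forall_coeff fun i j => by
    rcases i with _ | i
    · simp
    rcases j with _ | j
    · simp
    simpa using ((h i j).smul_left ((i + 1)! : ℚ)⁻¹).smul_right ((j + 1)! : ℚ)⁻¹

variable {c a : R}

theorem commute_adExpIntegral_eulerDeriv (h : AdPowCommute c a a) :
    Commute (adExpIntegral c a) (eulerDeriv (adExpIntegral c a)) :=
  commute_of_forall_coeff fun i j => by
    rcases i with _ | i
    · simp
    rcases j with _ | j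
    · simp
    simpa using
      (((h i j).smul_left ((i + 1)! : ℚ)⁻¹).smul_right ((j + 1)! : ℚ)⁻¹).smul_right (j + 1)

theorem commute_adExpIntegral_C_mul_X (h : AdPowCommute c a a) :
    Commute (adExpIntegral c a) (C a * X) :=
  commute_of_forall_coeff fun i j => by
    rcases i with _ | i
    · simp
    rcases j with _ | _ | j
    · simp
    · simpa using (h i 0).smul_left ((i + 1)! : ℚ)⁻¹
    · simp

theorem eulerDeriv_adExpIntegral_add_commutator :
    eulerDeriv (adExpIntegral c a)
      + (adExpIntegral c a * (C c * X) - C c * X * adExpIntegral c a) = C a * X := by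
  have hX : adExpIntegral c a * (C c * X) - C c * X * adExpIntegral c a
      = X * (adExpIntegral c a * C c - C c * adExpIntegral c a) := by
    rw [(commute_X (C c)).eq, ← mul_assoc, (commute_X _).eq, mul_assoc, mul_assoc, mul_sub]
  ext (_ | _ | m)
  · simp
  · simp [hX]
  · rw [hX, map_add, coeff_succ_X_mul, map_sub, coeff_mul_C, coeff_C_mul, coeff_eulerDeriv,
      coeff_succ_adExpIntegral, coeff_succ_adExpIntegral, smul_comm,
      inv_factorial_succ_smul_succ_nsmul, ad_pow_succ_apply, smul_mul_assoc, mul_smul_comm,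
      ← smul_sub, ← smul_add]
    simp

theorem expt_add_eq_expPS_adExpIntegral_mul_expt (h : AdPowCommute c a a) :
    expt (a + c) = expPS (adExpIntegral c a) * expt c := by
  set u := adExpIntegral c a
  have hu := constantCoeff_adExpIntegral c a
  have hw : u * (C c * X) - C c * X * u = C a * X - eulerDeriv u := by
    rw [← eulerDeriv_adExpIntegral_add_commutator (c := c) (a := a)]
    abel
  have hcomm : Commute u (u * (C c * X) - C c * X * u) := by
    rw [hw]
    exact (commute_adExpIntegral_C_mul_X h).sub_right (commute_adExpIntegral_eulerDeriv h)
  refine eq_of_eulerDeriv_eq_mul (Q := C (a + c) * X) (by simp) (eulerDeriv_expt _) ?_ (by simp)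
  rw [eulerDeriv_mul, eulerDeriv_expPS hu (commute_adExpIntegral_eulerDeriv h), eulerDeriv_expt,
    ← mul_assoc (expPS u), expPS_mul_eq_add_mul hu rfl hcomm, hw, map_add]
  noncomm_ring

theorem expt_add_mul_expt_neg_mul_expt_add {a₁ a₂ : R} (h₁₁ : AdPowCommute c a₁ a₁)
    (h₂₂ : AdPowCommute c a₂ a₂) (h₁₂ : AdPowCommute c a₁ a₂) :
    expt (a₁ + c) * expt (-c) * expt (a₂ + c) = expt (a₁ + a₂ + c) := by
  have h : AdPowCommute c (a₁ + a₂) (a₁ + a₂) := fun l m => by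
    simp only [map_add]
    exact ((h₁₁ l m).add_right (h₁₂ l m)).add_left ((h₁₂ m l).symm.add_right (h₂₂ l m))
  rw [expt_add_eq_expPS_adExpIntegral_mul_expt h₁₁, expt_add_eq_expPS_adExpIntegral_mul_expt h₂₂,
    expt_add_eq_expPS_adExpIntegral_mul_expt h, adExpIntegral_add,
    expPS_add (constantCoeff_adExpIntegral c a₁) (constantCoeff_adExpIntegral c a₂)
      (commute_adExpIntegral h₁₂),
    mul_assoc (expPS _), expt_mul_expt_neg, mul_one, mul_assoc]

end AdExpIntegral

end PowerSeries

/-- Let `X` be a (rational) vector space and `A₁, A₂, C ∈ End(X)⟦z⟧`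
formal power series of operators with zero constant term such that
`[ad_C^ℓ(A_i), ad_C^m(A_j)] = 0` for all `i, j ∈ {1,2}` and all `ℓ, m ≥ 0`.  Then
`e^{A₁+C} · e^{−C} · e^{A₂+C} = e^{A₁+A₂+C}`. -/
theorem exp_merge {V : Type*} [AddCommGroup V] [Module ℚ V]
    (A₁ A₂ C : PowerSeries (Module.End ℚ V))
    (hA₁ : PowerSeries.constantCoeff A₁ = 0)
    (hA₂ : PowerSeries.constantCoeff A₂ = 0)
    (hC : PowerSeries.constantCoeff C = 0)
    (hcomm : ∀ B ∈ ({A₁, A₂} : Set (PowerSeries (Module.End ℚ V))),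
      ∀ B' ∈ ({A₁, A₂} : Set (PowerSeries (Module.End ℚ V))),
        ∀ l m : ℕ, Commute (adPow C l B) (adPow C m B')) :
    expPS (A₁ + C) * expPS (-C) * expPS (A₂ + C) = expPS (A₁ + A₂ + C) := by
  have h₁ : A₁ ∈ ({A₁, A₂} : Set _) := Set.mem_insert _ _
  have h₂ : A₂ ∈ ({A₁, A₂} : Set _) := Set.mem_insert_of_mem _ rfl
  have hcomm' {B B'} (hB : B ∈ ({A₁, A₂} : Set _)) (hB' : B' ∈ ({A₁, A₂} : Set _)) :
      AdPowCommute C B B' := fun l m => by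
    simpa only [adPow_eq_ad_pow_apply] using hcomm B hB B' hB' l m
  have hadm {B} (hB : constantCoeff B = 0) : Admissible (expt (B + C)) :=
    admissible_expt (by rw [map_add, hB, hC, zero_add])
  have hneg : Admissible (expt (-C)) := admissible_expt (by rw [map_neg, hC, neg_zero])
  rw [expPS_eq_evalOne_expt, expPS_eq_evalOne_expt, expPS_eq_evalOne_expt,
    ← evalOne_mul (hadm hA₁) hneg, ← evalOne_mul ((hadm hA₁).mul hneg) (hadm hA₂),
    expt_add_mul_expt_neg_mul_expt_add (hcomm' h₁ h₁) (hcomm' h₂ h₂) (hcomm' h₁ h₂),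
    ← expPS_eq_evalOne_expt]
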